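/- Let (Ω, 𝓕, P) be a probability space, B > 0, and (Tₘ)_{m≥1} a sequence of random variables on Ω such that for each m, Tₘ has the Gamma distribution with shape m and rate B. Then the sequence m/Tₘ converges to the constant B in probability: for every ε > 0, P(|m/Tₘ − B| > ε) → 0 as m → ∞. -/

import Mathlib

/-!
Chebyshev's inequality applied to `Tₘ ~ Gamma(m, B)`, whose mean is `m / B` and variance
`m / B²`, shows `Tₘ / m → 1 / B` in probability at rate `O(1 / m)`. Inversion is continuous
at `1 / B` with an explicit modulus valid for every real argument, so `m / Tₘ → B` in
probability as well.
-/

open MeasureTheory ProbabilityTheory Filter Real Set Topology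

lemma abs_inv_sub_le_of_abs_sub_inv_le {x B ε : ℝ} (hB : 0 < B) (hε : 0 < ε)
    (h : |x - B⁻¹| ≤ ε / (B * (B + ε))) : |x⁻¹ - B| ≤ ε := by
  have hlow : (B + ε)⁻¹ ≤ x := by
    have : (B + ε)⁻¹ = B⁻¹ - ε / (B * (B + ε)) := by field_simp; ring
    linarith [(abs_le.mp h).1]
  have hx : 0 < x := lt_of_lt_of_le (by positivity) hlow
  calc |x⁻¹ - B| = B * |x - B⁻¹| * x⁻¹ := by
        rw [show x⁻¹ - B = -(B * (x - B⁻¹) * x⁻¹) by field_simp; ring, abs_neg, abs_mul,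
          abs_mul, abs_of_pos hB, abs_of_pos (inv_pos.mpr hx)]
    _ ≤ B * (ε / (B * (B + ε))) * (B + ε) := by
        gcongr
        exact inv_le_of_inv_le₀ (by positivity) hlow
    _ = ε := by field_simp

lemma mul_lt_abs_sub_div_of_lt_abs_div_sub {m t B ε : ℝ} (hm : 0 < m) (hB : 0 < B) (hε : 0 < ε)
    (h : ε < |m / t - B|) : m * (ε / (B * (B + ε))) < |t - m / B| := by
  by_contra! hclose
  refine h.not_ge ?_
  rw [← inv_div]
  refine abs_inv_sub_le_of_abs_sub_inv_le hB hε ?_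
  rw [show t / m - B⁻¹ = (t - m / B) / m by field_simp, abs_div, abs_of_pos hm, div_le_iff₀ hm]
  linarith

namespace ProbabilityTheory

lemma hasLaw_of_map_eq {Ω α : Type*} {mΩ : MeasurableSpace Ω} {mα : MeasurableSpace α}
    {P : Measure Ω} {X : Ω → α} {μ : Measure α} [NeZero μ] (h : P.map X = μ) :
    HasLaw X μ P where
  aemeasurable := aemeasurable_of_map_neZero (h ▸ inferInstance)
  map_eq := h

variable {a r : ℝ}

lemma integral_gammaMeasure (ha : 0 < a) (hr : 0 < r) (f : ℝ → ℝ) :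
    ∫ t, f t ∂gammaMeasure a r = ∫ t in Ioi 0, gammaPDFReal a r t * f t := by
  have hmeas : Measurable (gammaPDF a r) := (measurable_gammaPDFReal a r).ennreal_ofReal
  rw [gammaMeasure, integral_withDensity_eq_integral_toReal_smul hmeas
    (ae_of_all _ fun _ => ENNReal.ofReal_lt_top)]
  simp only [gammaPDF, ENNReal.toReal_ofReal (gammaPDFReal_nonneg ha hr _), smul_eq_mul]
  -- the density need not vanish at `0` (it is `r` there when `a = 1`)
  rw [← integral_Ici_eq_integral_Ioi]
  refine (setIntegral_eq_integral_of_forall_compl_eq_zero fun t ht => ?_).symm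
  rw [gammaPDFReal, if_neg (notMem_Ici.mp ht).not_ge, zero_mul]

lemma integral_pow_gammaMeasure (ha : 0 < a) (hr : 0 < r) (n : ℕ) :
    ∫ t, t ^ n ∂gammaMeasure a r = Gamma (a + n) / (Gamma a * r ^ n) := by
  have hdensity : ∀ t ∈ Ioi (0 : ℝ), gammaPDFReal a r t * t ^ n =
      r ^ a / Gamma a * (t ^ (a + n - 1) * exp (-(r * t))) := by
    intro t (ht : 0 < t)
    rw [gammaPDFReal, if_pos ht.le, show a + n - 1 = (a - 1) + n by ring, rpow_add ht,
      rpow_natCast]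
    ring
  have hG := Gamma_pos_of_pos ha
  rw [integral_gammaMeasure ha hr, setIntegral_congr_fun measurableSet_Ioi hdensity,
    integral_const_mul, integral_rpow_mul_exp_neg_mul_Ioi (by positivity) hr, one_div,
    inv_rpow hr.le, rpow_add hr, rpow_natCast]
  field_simp

lemma integrable_pow_gammaMeasure (ha : 0 < a) (hr : 0 < r) (n : ℕ) :
    Integrable (fun t : ℝ => t ^ n) (gammaMeasure a r) := by
  refine .of_integral_ne_zero ?_
  rw [integral_pow_gammaMeasure ha hr]
  have := Gamma_pos_of_pos (show 0 < a + n by positivity)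
  have := Gamma_pos_of_pos ha
  positivity

lemma integral_id_gammaMeasure (ha : 0 < a) (hr : 0 < r) :
    ∫ t, t ∂gammaMeasure a r = a / r := by
  have h := integral_pow_gammaMeasure ha hr 1
  rw [Nat.cast_one, Gamma_add_one ha.ne', pow_one, mul_comm (Gamma a),
    mul_div_mul_right _ _ (Gamma_pos_of_pos ha).ne'] at h
  simpa only [pow_one] using h

lemma memLp_two_id_gammaMeasure (ha : 0 < a) (hr : 0 < r) : MemLp id 2 (gammaMeasure a r) :=
  (memLp_two_iff_integrable_sq aestronglyMeasurable_id).mpr (integrable_pow_gammaMeasure ha hr 2)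

lemma variance_id_gammaMeasure (ha : 0 < a) (hr : 0 < r) :
    Var[id; gammaMeasure a r] = a / r ^ 2 := by
  have := isProbabilityMeasure_gammaMeasure ha hr
  rw [variance_eq_sub (memLp_two_id_gammaMeasure ha hr)]
  simp only [Pi.pow_apply, id_eq]
  rw [integral_pow_gammaMeasure ha hr 2, integral_id_gammaMeasure ha hr, Nat.cast_ofNat,
    show a + 2 = (a + 1) + 1 by ring, Gamma_add_one (by positivity), Gamma_add_one ha.ne']
  field_simp [(Gamma_pos_of_pos ha).ne']
  ring

lemma gammaMeasure_ge_le_div_sq (ha : 0 < a) (hr : 0 < r) {c : ℝ} (hc : 0 < c) :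
    gammaMeasure a r {t | c ≤ |t - a / r|} ≤ ENNReal.ofReal (a / r ^ 2 / c ^ 2) := by
  have := isProbabilityMeasure_gammaMeasure ha hr
  have := meas_ge_le_variance_div_sq (memLp_two_id_gammaMeasure ha hr) hc
  simp only [id_eq] at this
  rwa [variance_id_gammaMeasure ha hr, integral_id_gammaMeasure ha hr] at this

end ProbabilityTheory

/-- If `Tₘ ~ Gamma(shape m, rate B)` for each `m ≥ 1`, then `m / Tₘ → B` in probability. -/
theorem mle_rate_tendsto_in_probability {Ω : Type*} [MeasurableSpace Ω]
    (P : Measure Ω) [IsProbabilityMeasure P] (B : ℝ) (hB : 0 < B)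
    (T : ℕ → Ω → ℝ)
    (hT : ∀ m : ℕ, 1 ≤ m → Measure.map (T m) P = gammaMeasure (m : ℝ) B) :
    ∀ ε : ℝ, 0 < ε →
      Tendsto (fun m : ℕ => P {ω | ε < |(m : ℝ) / T m ω - B|}) atTop (nhds 0) := by
  intro ε hε
  set δ := ε / (B * (B + ε))
  have hδ : 0 < δ := by positivity
  have hbound : ∀ m : ℕ, 1 ≤ m →
      P {ω | ε < |(m : ℝ) / T m ω - B|} ≤ ENNReal.ofReal ((B ^ 2 * δ ^ 2)⁻¹ / m) := by
    intro m hm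
    have hm0 : (0 : ℝ) < m := by exact_mod_cast hm
    have := isProbabilityMeasure_gammaMeasure hm0 hB
    have hlaw := hasLaw_of_map_eq (hT m hm)
    calc P {ω | ε < |(m : ℝ) / T m ω - B|} ≤ P {ω | m * δ ≤ |T m ω - m / B|} :=
          measure_mono fun ω hω => (mul_lt_abs_sub_div_of_lt_abs_div_sub hm0 hB hε hω).le
      _ = gammaMeasure m B {t | m * δ ≤ |t - m / B|} :=
          hlaw.measure_eq (measurableSet_le measurable_const (measurable_id.sub_const _).abs)
      _ ≤ ENNReal.ofReal (m / B ^ 2 / (m * δ) ^ 2) :=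
          gammaMeasure_ge_le_div_sq hm0 hB (by positivity)
      _ = ENNReal.ofReal ((B ^ 2 * δ ^ 2)⁻¹ / m) := by congr 1; field_simp
  have hlim : Tendsto (fun m : ℕ => ENNReal.ofReal ((B ^ 2 * δ ^ 2)⁻¹ / m)) atTop (𝓝 0) := by
    have := ENNReal.tendsto_ofReal <|
      tendsto_const_div_atTop_nhds_zero_nat (B ^ 2 * δ ^ 2)⁻¹
    rwa [ENNReal.ofReal_zero] at this
  exact tendsto_of_tendsto_of_tendsto_of_le_of_le' tendsto_const_nhds hlim
    (.of_forall fun _ => zero_le) (eventually_atTop.mpr ⟨1, hbound⟩)
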